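/- arXiv:2601.11146 — 2 statements merged into one kernel-verified Lean document; each statement's English description precedes it below -/
import Mathlib

section
/- (Kronecker simultaneous approximation) If v₁, …, v_n are real numbers linearly independent over ℚ, and α₁, …, α_n, T, ε are positive reals, then there exist t > T and integers p₁, …, p_n such that |t·v_j − p_j − α_j| < ε for all j = 1, …, n. -/
open Finset

noncomputable def ee (x : ℝ) : ℂ := Complex.exp ((2 * Real.pi * x : ℝ) * Complex.I)

lemma ee_add (x y : ℝ) : ee (x + y) = ee x * ee y := by
  rw [ee, ee, ee, ← Complex.exp_add]; congr 1; push_cast; ring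

lemma ee_pow (x : ℝ) (m : ℕ) : ee x ^ m = ee (m * x) := by
  rw [ee, ee, ← Complex.exp_nat_mul]; congr 1; push_cast; ring

lemma norm_ee (x : ℝ) : ‖ee x‖ = 1 := by
  simp [ee, Complex.norm_exp]

lemma ee_sum {ι : Type*} (s : Finset ι) (f : ι → ℝ) :
    ee (∑ i ∈ s, f i) = ∏ i ∈ s, ee (f i) := by
  simp only [ee]
  rw [← Complex.exp_sum]; congr 1
  push_cast
  rw [Finset.mul_sum, Finset.sum_mul]

lemma norm_one_add_ee (x : ℝ) :
    ‖1 + ee x‖ = Real.sqrt (2 + 2 * Real.cos (2 * Real.pi * x)) := by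
  have h : (1 : ℂ) + ee x =
      ((1 + Real.cos (2 * Real.pi * x) : ℝ) : ℂ) + (Real.sin (2 * Real.pi * x) : ℝ) * Complex.I := by
    rw [ee, Complex.exp_mul_I]
    push_cast [Complex.ofReal_cos, Complex.ofReal_sin]
    ring
  rw [h, Complex.norm_def, Complex.normSq_add_mul_I]
  congr 1
  have := Real.sin_sq_add_cos_sq (2 * Real.pi * x)
  ring_nf
  ring_nf at this
  linarith

lemma coeff_norm_le {ι : Type*} [DecidableEq ι] (s : Finset ι) (c : ι → ℂ) (μ : ι → ℝ)
    (hinj : ∀ i ∈ s, ∀ j ∈ s, μ i = μ j → i = j)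
    (f : ℝ → ℂ) (hf : ∀ t : ℝ, f t = ∑ i ∈ s, c i * ee (μ i * t))
    (i₀ : ι) (hi₀ : i₀ ∈ s) (T₀ B : ℝ) (hB : ∀ t ≥ T₀, ‖f t‖ ≤ B) :
    ‖c i₀‖ ≤ B := by
  set γ : ι → ℂ := fun i => ((2 * Real.pi * (μ i - μ i₀) : ℝ) : ℂ) * Complex.I with hγ
  have hγne : ∀ i ∈ s, i ≠ i₀ → γ i ≠ 0 := by
    intro i hi hne
    have hμ : μ i ≠ μ i₀ := fun h => hne (hinj i hi i₀ hi₀ h)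
    have h2 : (2 * Real.pi * (μ i - μ i₀)) ≠ 0 :=
      mul_ne_zero (mul_ne_zero two_ne_zero Real.pi_ne_zero) (sub_ne_zero.mpr hμ)
    exact mul_ne_zero (Complex.ofReal_ne_zero.mpr h2) Complex.I_ne_zero
  have hg : ∀ t : ℝ, f t * ee (-(μ i₀ * t)) = ∑ i ∈ s, c i * Complex.exp (γ i * t) := by
    intro t
    rw [hf t, Finset.sum_mul]
    refine Finset.sum_congr rfl fun i _ => ?_
    rw [mul_assoc]
    congr 1
    rw [ee, ee, ← Complex.exp_add, hγ]
    congr 1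
    push_cast
    ring
  refine le_of_forall_pos_le_add fun δ hδ => ?_
  set D : ℝ := ∑ i ∈ s.erase i₀, ‖c i‖ * (2 / ‖γ i‖) with hD
  have hDnonneg : 0 ≤ D :=
    Finset.sum_nonneg fun i _ => mul_nonneg (norm_nonneg _) (by positivity)
  set T : ℝ := max 1 (D / δ) with hT
  have hT1 : (1:ℝ) ≤ T := le_max_left _ _
  have hTpos : 0 < T := lt_of_lt_of_le one_pos hT1
  have hint : ∀ i : ι, IntervalIntegrable (fun t : ℝ => Complex.exp (γ i * t))
      MeasureTheory.volume T₀ (T₀ + T) :=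
    fun i => (Complex.continuous_exp.comp
      (continuous_const.mul Complex.continuous_ofReal)).intervalIntegrable _ _
  -- value of the integral of each exponential
  have hI0 : (∫ t in T₀..(T₀ + T), Complex.exp (γ i₀ * t)) = (T : ℂ) := by
    have : γ i₀ = 0 := by simp [hγ]
    simp [this, intervalIntegral.integral_const]
  have hIbound : ∀ i ∈ s.erase i₀,
      ‖∫ t in T₀..(T₀ + T), Complex.exp (γ i * t)‖ ≤ 2 / ‖γ i‖ := by
    intro i hi
    obtain ⟨hne, hi'⟩ := Finset.mem_erase.mp hi
    have hne0 := hγne i hi' hne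
    rw [integral_exp_mul_complex hne0, norm_div]
    have h1 : ∀ x : ℝ, ‖Complex.exp (γ i * x)‖ = 1 := by
      intro x
      rw [hγ]
      rw [show ((2 * Real.pi * (μ i - μ i₀) : ℝ) : ℂ) * Complex.I * (x : ℂ)
          = ((2 * Real.pi * (μ i - μ i₀) * x : ℝ) : ℂ) * Complex.I by push_cast; ring]
      simp [Complex.norm_exp]
    have hnum : ‖Complex.exp (γ i * (T₀ + T : ℝ)) - Complex.exp (γ i * (T₀ : ℝ))‖ ≤ 2 := by
      refine (norm_sub_le _ _).trans ?_
      rw [h1, h1]; norm_num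
    gcongr
  -- integral of the modulated function
  have hsum : (∫ t in T₀..(T₀ + T), f t * ee (-(μ i₀ * t)))
      = ∑ i ∈ s, c i * ∫ t in T₀..(T₀ + T), Complex.exp (γ i * t) := by
    rw [intervalIntegral.integral_congr (g := fun t => ∑ i ∈ s, c i * Complex.exp (γ i * t))
      (fun t _ => hg t)]
    rw [intervalIntegral.integral_finset_sum (fun i _ => (hint i).const_mul (c i))]
    exact Finset.sum_congr rfl fun i _ => intervalIntegral.integral_const_mul _ _
  have hsplit : c i₀ * (T : ℂ)
      = (∫ t in T₀..(T₀ + T), f t * ee (-(μ i₀ * t)))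
        - ∑ i ∈ s.erase i₀, c i * ∫ t in T₀..(T₀ + T), Complex.exp (γ i * t) := by
    rw [hsum, ← Finset.add_sum_erase s _ hi₀, hI0]
    ring
  -- norm bounds
  have hnormint : ‖∫ t in T₀..(T₀ + T), f t * ee (-(μ i₀ * t))‖ ≤ B * T := by
    have := intervalIntegral.norm_integral_le_of_norm_le_const
      (C := B) (f := fun t => f t * ee (-(μ i₀ * t))) (a := T₀) (b := T₀ + T) ?_
    · calc ‖_‖ ≤ B * |T₀ + T - T₀| := this
        _ = B * T := by rw [show T₀ + T - T₀ = T by ring, abs_of_pos hTpos]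
    · intro x hx
      rw [norm_mul, norm_ee, mul_one]
      apply hB
      rw [Set.uIoc_of_le (by linarith)] at hx
      exact le_of_lt hx.1
  have hnormsum : ‖∑ i ∈ s.erase i₀, c i * ∫ t in T₀..(T₀ + T), Complex.exp (γ i * t)‖ ≤ D := by
    refine (norm_sum_le _ _).trans ?_
    rw [hD]
    exact Finset.sum_le_sum fun i hi => by
      rw [norm_mul]
      exact mul_le_mul_of_nonneg_left (hIbound i hi) (norm_nonneg _)
  have hfinal : ‖c i₀‖ * T ≤ B * T + D := by
    have : ‖c i₀ * (T : ℂ)‖ ≤ B * T + D := by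
      rw [hsplit]
      exact (norm_sub_le _ _).trans (add_le_add hnormint hnormsum)
    rwa [norm_mul, Complex.norm_real, Real.norm_eq_abs, abs_of_pos hTpos] at this
  have hDT : D / T ≤ δ := by
    rw [div_le_iff₀ hTpos]
    calc D = (D / δ) * δ := by field_simp
      _ ≤ T * δ := mul_le_mul_of_nonneg_right (le_max_right _ _) hδ.le
      _ = δ * T := mul_comm _ _
  calc ‖c i₀‖ = (‖c i₀‖ * T) / T := by field_simp
    _ ≤ (B * T + D) / T := by gcongr
    _ = B + D / T := by field_simp
    _ ≤ B + δ := by linarith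

lemma psi_pow_expand (n k : ℕ) (v α : Fin n → ℝ) (t : ℝ) :
    (∏ j, (1 + ee (t * v j - α j))) ^ k
      = ∑ m ∈ Fintype.piFinset (fun _ : Fin n => Finset.range (k + 1)),
          ((∏ j, (k.choose (m j) : ℂ)) * ee (-(∑ j, (m j : ℝ) * α j)))
            * ee ((∑ j, (m j : ℝ) * v j) * t) := by
  rw [← Finset.prod_pow]
  have h1 : ∀ j : Fin n, (1 + ee (t * v j - α j)) ^ k
      = ∑ m ∈ Finset.range (k + 1), ee ((m : ℝ) * (t * v j - α j)) * (k.choose m : ℂ) := by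
    intro j
    rw [add_comm, add_pow]
    exact Finset.sum_congr rfl fun m _ => by rw [one_pow, mul_one, ee_pow]
  simp_rw [h1]
  rw [Finset.prod_univ_sum]
  refine Finset.sum_congr rfl fun m hm => ?_
  rw [Finset.prod_mul_distrib, ← ee_sum]
  have harg : (∑ j, (m j : ℝ) * (t * v j - α j))
      = (-(∑ j, (m j : ℝ) * α j)) + ((∑ j, (m j : ℝ) * v j) * t) := by
    rw [Finset.sum_mul, ← Finset.sum_neg_distrib, ← Finset.sum_add_distrib]
    exact Finset.sum_congr rfl fun j _ => by ring
  rw [harg, ee_add]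
  ring

lemma factor_bound {θ ε : ℝ} (hε : 0 < ε) (hε2 : ε ≤ 1/2) (h : ∀ p : ℤ, ε ≤ |θ - p|) :
    ‖1 + ee θ‖ ≤ Real.sqrt (2 + 2 * Real.cos (2 * Real.pi * ε)) := by
  have hπ := Real.pi_pos
  rw [norm_one_add_ee]
  apply Real.sqrt_le_sqrt
  have hd := h (round θ)
  have hd2 : |θ - round θ| ≤ 1/2 := abs_sub_round θ
  have hcos : Real.cos (2 * Real.pi * θ) ≤ Real.cos (2 * Real.pi * ε) := by
    have e1 : Real.cos (2 * Real.pi * θ) = Real.cos (2 * Real.pi * |θ - round θ|) := by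
      have e2 : 2 * Real.pi * θ = 2 * Real.pi * (θ - round θ) + (round θ : ℤ) * (2 * Real.pi) := by
        push_cast; ring
      rw [e2, Real.cos_add_int_mul_two_pi]
      rw [show 2 * Real.pi * |θ - round θ| = |2 * Real.pi * (θ - round θ)| by
        rw [abs_mul, abs_of_pos Real.two_pi_pos]]
      rw [Real.cos_abs]
    rw [e1]
    apply Real.cos_le_cos_of_nonneg_of_le_pi (by positivity) (by nlinarith)
    nlinarith
  linarith

theorem kron_aux
    (n : ℕ) (v α : Fin n → ℝ)
    (hindep : ∀ r : Fin n → ℚ, (∑ j, (r j : ℝ) * v j) = 0 → ∀ j, r j = 0)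
    (T ε : ℝ) (hT : 0 < T) (hε : 0 < ε) (hε2 : ε ≤ 1/2) :
    ∃ t : ℝ, T < t ∧ ∃ p : Fin n → ℤ,
      ∀ j, |t * v j - p j - α j| < ε := by
  classical
  have hπ := Real.pi_pos
  by_cases hn : n = 0
  · subst hn
    exact ⟨T + 1, by linarith, fun _ => 0, fun j => j.elim0⟩
  by_contra hcon
  push_neg at hcon
  have hfail : ∀ t, T < t → ∃ j, ∀ p : ℤ, ε ≤ |t * v j - p - α j| := by
    intro t ht
    by_contra hno
    push_neg at hno
    choose p hp using hno
    obtain ⟨j, hj⟩ := hcon t ht p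
    exact absurd (hp j) (not_lt.mpr hj)
  set B₀ : ℝ := Real.sqrt (2 + 2 * Real.cos (2 * Real.pi * ε)) with hB₀def
  have hB₀nonneg : 0 ≤ B₀ := Real.sqrt_nonneg _
  have hB₀lt : B₀ < 2 := by
    have hcos : Real.cos (2 * Real.pi * ε) < 1 := by
      have := Real.cos_lt_cos_of_nonneg_of_le_pi (x := 0) (y := 2 * Real.pi * ε)
        le_rfl (by nlinarith) (by positivity)
      simpa using this
    have h4 : B₀ < Real.sqrt 4 := by
      rw [hB₀def]
      exact Real.sqrt_lt_sqrt
        (by nlinarith [Real.neg_one_le_cos (2 * Real.pi * ε)]) (by linarith)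
    have h5 : Real.sqrt 4 = 2 := by
      rw [show (4:ℝ) = 2^2 by norm_num, Real.sqrt_sq (by norm_num)]
    linarith
  set B : ℝ := B₀ * 2 ^ (n - 1) with hBdef
  have hBnonneg : 0 ≤ B := by positivity
  have hψbound : ∀ t, T + 1 ≤ t → ‖∏ j, (1 + ee (t * v j - α j))‖ ≤ B := by
    intro t ht
    obtain ⟨j₀, hj₀⟩ := hfail t (by linarith)
    rw [norm_prod, ← Finset.mul_prod_erase univ _ (mem_univ j₀)]
    have h2 : ∀ j : Fin n, ‖1 + ee (t * v j - α j)‖ ≤ 2 := fun j =>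
      (norm_add_le _ _).trans (by rw [norm_one, norm_ee]; norm_num)
    have hfac : ‖1 + ee (t * v j₀ - α j₀)‖ ≤ B₀ := by
      apply factor_bound hε hε2
      intro p
      have := hj₀ p
      rwa [show t * v j₀ - p - α j₀ = (t * v j₀ - α j₀) - p by ring] at this
    have hrest : (∏ j ∈ univ.erase j₀, ‖1 + ee (t * v j - α j)‖) ≤ 2 ^ (n - 1) := by
      calc (∏ j ∈ univ.erase j₀, ‖1 + ee (t * v j - α j)‖)
          ≤ ∏ _j ∈ univ.erase j₀, (2:ℝ) :=
            Finset.prod_le_prod (fun j _ => norm_nonneg _) (fun j _ => h2 j)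
        _ = 2 ^ (n - 1) := by
            rw [Finset.prod_const, Finset.card_erase_of_mem (mem_univ j₀), Finset.card_univ,
              Fintype.card_fin]
    exact mul_le_mul hfac hrest (Finset.prod_nonneg fun j _ => norm_nonneg _) hB₀nonneg
  -- choose K
  set ρ : ℝ := B₀ / 2 with hρdef
  have hρnonneg : 0 ≤ ρ := by positivity
  have hρlt : ρ < 1 := by rw [hρdef]; linarith
  have htend := tendsto_pow_const_mul_const_pow_of_abs_lt_one n
    (r := ρ ^ 2) (by rw [abs_of_nonneg (by positivity)]; nlinarith)
  have hpos3 : (0:ℝ) < ((3:ℝ) ^ n)⁻¹ := by positivity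
  have hev : ∀ᶠ K : ℕ in Filter.atTop, (K : ℝ) ^ n * (ρ ^ 2) ^ K < ((3:ℝ) ^ n)⁻¹ :=
    htend.eventually (gt_mem_nhds hpos3)
  obtain ⟨K, hKsmall, hK1⟩ := (hev.and (Filter.eventually_ge_atTop 1)).exists
  -- apply the coefficient bound
  set C : ℝ := (((2 * K).choose K : ℕ) : ℝ) with hCdef
  have hCpos : 0 < C := by
    rw [hCdef]
    exact_mod_cast Nat.choose_pos (by omega)
  have hcoeff : C ^ n ≤ B ^ (2 * K) := by
    set s2 := Fintype.piFinset (fun _ : Fin n => Finset.range (2 * K + 1)) with hs2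
    set cc : (Fin n → ℕ) → ℂ := fun m =>
      (∏ j, ((2 * K).choose (m j) : ℂ)) * ee (-(∑ j, (m j : ℝ) * α j)) with hcc
    set μμ : (Fin n → ℕ) → ℝ := fun m => ∑ j, (m j : ℝ) * v j with hμμ
    have hinj2 : ∀ m ∈ s2, ∀ m' ∈ s2, μμ m = μμ m' → m = m' := by
      intro m _ m' _ heq
      set r : Fin n → ℚ := fun j => (m j : ℚ) - (m' j : ℚ) with hrdef
      have heq' : (∑ j, (m j : ℝ) * v j) = ∑ j, (m' j : ℝ) * v j := heq
      have h0 : (∑ j, (r j : ℝ) * v j) = 0 := by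
        simp only [hrdef]
        push_cast
        simp only [sub_mul]
        rw [Finset.sum_sub_distrib, heq', sub_self]
      have hz := hindep r h0
      funext j
      have hj := hz j
      rw [hrdef] at hj
      have : (m j : ℚ) = (m' j : ℚ) := by simpa [sub_eq_zero] using hj
      exact_mod_cast this
    have hmem : (fun _ : Fin n => K) ∈ s2 := by
      rw [hs2, Fintype.mem_piFinset]
      intro j
      simp only [Finset.mem_range]
      omega
    have hbd : ∀ t ≥ T + 1, ‖(∏ j, (1 + ee (t * v j - α j))) ^ (2 * K)‖ ≤ B ^ (2 * K) := by
      intro t ht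
      rw [norm_pow]
      exact pow_le_pow_left₀ (norm_nonneg _) (hψbound t ht) _
    have h := coeff_norm_le s2 cc μμ hinj2
      (fun t => (∏ j, (1 + ee (t * v j - α j))) ^ (2 * K))
      (fun t => psi_pow_expand n (2 * K) v α t)
      (fun _ => K) hmem (T + 1) (B ^ (2 * K)) hbd
    have hnorm : ‖cc (fun _ => K)‖ = C ^ n := by
      rw [hcc]
      simp only []
      rw [norm_mul, norm_ee, mul_one, norm_prod]
      simp only [Complex.norm_natCast]
      rw [Finset.prod_const, Finset.card_univ, Fintype.card_fin, hCdef]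
    rw [← hnorm]
    exact h
  -- final arithmetic
  have h2n : (2:ℝ) ^ n = 2 * 2 ^ (n - 1) := by
    rw [← pow_succ']
    congr 1
    omega
  have hBeq : B ^ (2 * K) = (ρ ^ 2) ^ K * (4:ℝ) ^ (K * n) := by
    have hB' : B = ρ * 2 ^ n := by rw [hBdef, hρdef, h2n]; ring
    have e1 : (ρ ^ 2) ^ K = ρ ^ (2 * K) := by rw [← pow_mul]
    have e2 : ((2:ℝ) ^ n) ^ (2 * K) = (4:ℝ) ^ (K * n) := by
      rw [← pow_mul, show (4:ℝ) = 2 ^ 2 by norm_num, ← pow_mul]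
      congr 1
      ring
    rw [hB', mul_pow, e1, e2]
  have hC4 : (4:ℝ) ^ K ≤ 2 * K * C := by
    have h := Nat.four_pow_le_two_mul_self_mul_centralBinom K hK1
    have h' : Nat.centralBinom K = (2 * K).choose K := rfl
    rw [h'] at h
    rw [hCdef]
    exact_mod_cast h
  have hpow : ((4:ℝ) ^ K) ^ n ≤ ((2 * K : ℝ) * C) ^ n :=
    pow_le_pow_left₀ (by positivity) hC4 n
  have hKpos : (0:ℝ) < (K:ℝ) := by exact_mod_cast hK1
  have hkey : (1:ℝ) ≤ (2 * (K:ℝ)) ^ n * (ρ ^ 2) ^ K := by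
    have hpos4 : (0:ℝ) < (4:ℝ) ^ (K * n) := by positivity
    have hchain : (4:ℝ) ^ (K * n) ≤ ((2 * (K:ℝ)) ^ n * (ρ ^ 2) ^ K) * (4:ℝ) ^ (K * n) := by
      calc (4:ℝ) ^ (K * n) = ((4:ℝ) ^ K) ^ n := by rw [← pow_mul]
        _ ≤ ((2 * K : ℝ) * C) ^ n := hpow
        _ = (2 * (K:ℝ)) ^ n * C ^ n := by rw [mul_pow]
        _ ≤ (2 * (K:ℝ)) ^ n * ((ρ ^ 2) ^ K * (4:ℝ) ^ (K * n)) := by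
            apply mul_le_mul_of_nonneg_left _ (by positivity)
            rw [← hBeq]; exact hcoeff
        _ = ((2 * (K:ℝ)) ^ n * (ρ ^ 2) ^ K) * (4:ℝ) ^ (K * n) := by ring
    exact (le_mul_iff_one_le_left hpos4).mp hchain
  have h3 : (2 * (K:ℝ)) ^ n ≤ (3:ℝ) ^ n * (K:ℝ) ^ n := by
    rw [← mul_pow]
    exact pow_le_pow_left₀ (by positivity) (by linarith) n
  have h4 : (1:ℝ) ≤ (3:ℝ) ^ n * ((K:ℝ) ^ n * (ρ ^ 2) ^ K) := by
    calc (1:ℝ) ≤ (2 * (K:ℝ)) ^ n * (ρ ^ 2) ^ K := hkey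
      _ ≤ ((3:ℝ) ^ n * (K:ℝ) ^ n) * (ρ ^ 2) ^ K :=
          mul_le_mul_of_nonneg_right h3 (by positivity)
      _ = (3:ℝ) ^ n * ((K:ℝ) ^ n * (ρ ^ 2) ^ K) := by ring
  have h5 : (3:ℝ) ^ n * ((K:ℝ) ^ n * (ρ ^ 2) ^ K) < (3:ℝ) ^ n * ((3:ℝ) ^ n)⁻¹ :=
    mul_lt_mul_of_pos_left hKsmall (by positivity)
  have h6 : (3:ℝ) ^ n * ((3:ℝ) ^ n)⁻¹ = 1 := by
    field_simp
  linarith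

theorem kronecker_simultaneous_approximation
    (n : ℕ) (v α : Fin n → ℝ)
    (hindep : ∀ r : Fin n → ℚ, (∑ j, (r j : ℝ) * v j) = 0 → ∀ j, r j = 0)
    (hα : ∀ j, 0 < α j) (T ε : ℝ) (hT : 0 < T) (hε : 0 < ε) :
    ∃ t : ℝ, T < t ∧ ∃ p : Fin n → ℤ,
      ∀ j, |t * v j - p j - α j| < ε := by
  obtain ⟨t, ht, p, hp⟩ := kron_aux n v α hindep T (min ε (1/2)) hT
    (lt_min hε (by norm_num)) (min_le_right _ _)
  exact ⟨t, ht, p, fun j => lt_of_lt_of_le (hp j) (min_le_left _ _)⟩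
end

section
/- A function f ∈ C[0,1] is the uniform limit of a sequence of C²[0,1] functions whose first and second derivatives are uniformly bounded (by a single constant over the whole sequence) if and only if f is continuously differentiable with Lipschitz continuous derivative (f ∈ C^{1,1}[0,1]). -/
open Real Set Filter


lemma forward_dir
    (f : ℝ → ℝ)
    (F : ℕ → ℝ → ℝ) (M : ℝ)
    (hC2 : ∀ j, ContDiffOn ℝ 2 (F j) (Icc 0 1))
    (hbd : ∀ j, ∀ x ∈ Icc (0:ℝ) 1,
        |derivWithin (F j) (Icc 0 1) x| ≤ M ∧
        |derivWithin (derivWithin (F j) (Icc 0 1)) (Icc 0 1) x| ≤ M)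
    (hunif : TendstoUniformlyOn F f atTop (Icc 0 1)) :
    (∃ f' : ℝ → ℝ, ∃ L : ℝ,
      (∀ x ∈ Icc (0:ℝ) 1, HasDerivWithinAt f (f' x) (Icc 0 1) x) ∧
      ContinuousOn f' (Icc 0 1) ∧
      ∀ x ∈ Icc (0:ℝ) 1, ∀ y ∈ Icc (0:ℝ) 1, |f' x - f' y| ≤ L * |x - y|) := by
  have hUD : UniqueDiffOn ℝ (Icc (0:ℝ) 1) := uniqueDiffOn_Icc one_pos
  set I : Set ℝ := Icc 0 1 with hIdef
  have h0I : (0:ℝ) ∈ I := ⟨le_refl 0, by norm_num⟩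
  have hM : 0 ≤ M := le_trans (abs_nonneg _) ((hbd 0 0 h0I).1)
  set gd : ℕ → ℝ → ℝ := fun j => derivWithin (F j) I with hgddef
  -- differentiability facts
  have hdiff1 : ∀ j, ∀ x ∈ I, HasDerivWithinAt (F j) (gd j x) I x := by
    intro j x hx
    exact (((hC2 j).differentiableOn (by norm_num)) x hx).hasDerivWithinAt
  have hdiff2 : ∀ j, DifferentiableOn ℝ (gd j) I := by
    intro j
    exact ((hC2 j).derivWithin (m := 1) hUD (by norm_num)).differentiableOn (by norm_num)
  -- Lipschitz bound on gd j
  have hglip : ∀ j, ∀ x ∈ I, ∀ y ∈ I, |gd j x - gd j y| ≤ M * |x - y| := by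
    intro j x hx y hy
    have := Convex.norm_image_sub_le_of_norm_derivWithin_le (𝕜 := ℝ)
      (hdiff2 j) (fun z hz => by simpa using (hbd j z hz).2) (convex_Icc 0 1) hy hx
    simpa [Real.norm_eq_abs, abs_sub_comm] using this
  -- Taylor-type estimate
  have htaylor : ∀ j, ∀ x ∈ I, ∀ y ∈ I,
      |F j y - F j x - gd j x * (y - x)| ≤ M * |y - x| * |y - x| := by
    intro j x hx y hy
    set s : Set ℝ := uIcc x y with hsdef
    have hsub : s ⊆ I := uIcc_subset_Icc hx hy
    have hψ : ∀ t ∈ s, HasDerivWithinAt (fun u => F j u - gd j x * u)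
        (gd j t - gd j x) s t := by
      intro t ht
      have h := (((hdiff1 j t (hsub ht)).mono hsub).sub
        ((hasDerivWithinAt_id t s).const_mul (gd j x)))
      simp only [id_eq, mul_one] at h
      exact h
    have hψbd : ∀ t ∈ s, ‖gd j t - gd j x‖ ≤ M * |y - x| := by
      intro t ht
      have h1 : |gd j t - gd j x| ≤ M * |t - x| := hglip j t (hsub ht) x hx
      have h2 : |t - x| ≤ |y - x| := abs_sub_left_of_mem_uIcc ?_ |>.trans (le_refl _)
      · exact h1.trans (mul_le_mul_of_nonneg_left h2 hM)
      · exact ht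
    have := Convex.norm_image_sub_le_of_norm_hasDerivWithin_le hψ hψbd
      (convex_uIcc x y) (left_mem_uIcc (a := x) (b := y)) (right_mem_uIcc (a := x) (b := y))
    have heq : (F j y - gd j x * y) - (F j x - gd j x * x)
        = F j y - F j x - gd j x * (y - x) := by ring
    rw [heq] at this
    simpa [Real.norm_eq_abs] using this
  -- uniform Cauchy of gd
  have hFcauchy := hunif.uniformCauchySeqOn
  rw [Metric.uniformCauchySeqOn_iff] at hFcauchy
  have hgcauchy : UniformCauchySeqOn gd atTop I := by
    rw [Metric.uniformCauchySeqOn_iff]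
    intro ε hε
    set h : ℝ := min (1/2) (ε / (4 * (M + 1))) with hhdef
    have hh0 : 0 < h := by
      apply lt_min (by norm_num)
      positivity
    have hh2 : h ≤ 1/2 := min_le_left _ _
    have hMh : 2 * M * h ≤ ε / 2 := by
      have h1 : h ≤ ε / (4 * (M + 1)) := min_le_right _ _
      have h2 : 2 * M * h ≤ 2 * M * (ε / (4 * (M + 1))) := by
        apply mul_le_mul_of_nonneg_left h1 (by positivity)
      have h3 : 2 * M * (ε / (4 * (M + 1))) ≤ ε / 2 := by
        have h4 : ε / (4 * (M + 1)) * (4 * (M + 1)) = ε := div_mul_cancel₀ _ (by positivity)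
        have hq0 : 0 ≤ ε / (4 * (M + 1)) := by positivity
        nlinarith
      linarith
    obtain ⟨N, hN⟩ := hFcauchy (ε * h / 8) (by positivity)
    refine ⟨N, fun m hm n hn x hx => ?_⟩
    -- choose y
    obtain ⟨y, hy, hyx⟩ : ∃ y ∈ I, |y - x| = h := by
      rcases le_or_gt x (1/2) with hhalf | hhalf
      · exact ⟨x + h, ⟨by linarith [hx.1], by linarith [hx.2, hh2, hhalf]⟩, by
          rw [add_sub_cancel_left, abs_of_pos hh0]⟩
      · exact ⟨x - h, ⟨by linarith [hx.1, hh2, hhalf], by linarith [hx.2]⟩, by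
          rw [sub_sub_cancel_left, abs_neg, abs_of_pos hh0]⟩
    have t1 := htaylor m x hx y hy
    have t2 := htaylor n x hx y hy
    have d1 := hN m hm n hn x hx
    have d2 := hN m hm n hn y hy
    rw [Real.dist_eq] at d1 d2 ⊢
    have key : |(gd m x - gd n x) * (y - x)| ≤
        |F m y - F n y| + |F m x - F n x| + 2 * (M * |y - x| * |y - x|) := by
      have e1 : (gd m x - gd n x) * (y - x)
          = (F m y - F m x - gd m x * (y - x)) * (-1)
            + (F n y - F n x - gd n x * (y - x))
            + (F m y - F n y) + (F n x - F m x) := by ring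
      rw [e1]
      calc _ ≤ |(F m y - F m x - gd m x * (y - x)) * (-1)
            + (F n y - F n x - gd n x * (y - x))
            + (F m y - F n y)| + |F n x - F m x| := abs_add_le _ _
        _ ≤ |(F m y - F m x - gd m x * (y - x)) * (-1)
            + (F n y - F n x - gd n x * (y - x))| + |F m y - F n y| + |F n x - F m x| := by
              linarith [abs_add_le ((F m y - F m x - gd m x * (y - x)) * (-1)
                + (F n y - F n x - gd n x * (y - x))) (F m y - F n y)]
        _ ≤ |(F m y - F m x - gd m x * (y - x)) * (-1)|
            + |F n y - F n x - gd n x * (y - x)| + |F m y - F n y| + |F n x - F m x| := by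
              linarith [abs_add_le ((F m y - F m x - gd m x * (y - x)) * (-1))
                (F n y - F n x - gd n x * (y - x))]
        _ ≤ |F m y - F n y| + |F m x - F n x| + 2 * (M * |y - x| * |y - x|) := by
              rw [abs_mul]
              simp only [abs_neg, abs_one, mul_one]
              rw [abs_sub_comm (F n x) (F m x)]
              linarith
    rw [abs_mul, hyx] at key
    have hdsum : |F m y - F n y| + |F m x - F n x| < 2 * (ε * h / 8) := by linarith
    have hthis : |gd m x - gd n x| * h < 2 * (ε * h / 8) + 2 * (M * h * h) := by
      linarith
    have hfin : |gd m x - gd n x| < ε / 4 + 2 * M * h := by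
      have h5 : |gd m x - gd n x| * h < (ε / 4 + 2 * M * h) * h := by nlinarith
      exact lt_of_mul_lt_mul_right h5 hh0.le
    calc |gd m x - gd n x| < ε / 4 + 2 * M * h := hfin
      _ ≤ ε / 4 + ε / 2 := by linarith
      _ < ε := by linarith
  -- limit function
  set f' : ℝ → ℝ := fun x => limUnder atTop (fun j => gd j x) with hf'def
  have hptlim : ∀ x ∈ I, Tendsto (fun j => gd j x) atTop (nhds (f' x)) := by
    intro x hx
    exact (hgcauchy.cauchySeq hx).tendsto_limUnder
  have hgtu : TendstoUniformlyOn gd f' atTop I :=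
    hgcauchy.tendstoUniformlyOn_of_tendsto hptlim
  have hf'cont : ContinuousOn f' I := by
    apply hgtu.continuousOn
    refine Frequently.of_forall fun j => ?_
    exact (hdiff2 j).continuousOn
  have hf'lip : ∀ x ∈ I, ∀ y ∈ I, |f' x - f' y| ≤ M * |x - y| := by
    intro x hx y hy
    have hTp : Tendsto (fun j => |gd j x - gd j y|) atTop (nhds (|f' x - f' y|)) :=
      ((hptlim x hx).sub (hptlim y hy)).abs
    exact le_of_tendsto hTp (Eventually.of_forall fun j => hglip j x hx y hy)
  -- quadratic estimate in limit
  have hquad : ∀ x ∈ I, ∀ y ∈ I,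
      |f y - f x - f' x * (y - x)| ≤ M * |y - x| * |y - x| := by
    intro x hx y hy
    have hfT : ∀ z, z ∈ I → Tendsto (fun j => F j z) atTop (nhds (f z)) := by
      intro z hz
      exact hunif.tendsto_at hz
    have hT : Tendsto (fun j => |F j y - F j x - gd j x * (y - x)|) atTop
        (nhds (|f y - f x - f' x * (y - x)|)) := by
      apply Tendsto.abs
      exact ((hfT y hy).sub (hfT x hx)).sub ((hptlim x hx).mul_const (y - x))
    exact le_of_tendsto hT (Eventually.of_forall fun j => htaylor j x hx y hy)
  -- conclusion
  refine ⟨f', M, ?_, hf'cont, hf'lip⟩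
  intro x hx
  rw [hasDerivWithinAt_iff_isLittleO]
  have hbig : (fun y => f y - f x - (y - x) • f' x)
      =O[nhdsWithin x I] (fun y => (y - x) * (y - x)) := by
    rw [Asymptotics.isBigO_iff]
    refine ⟨M, ?_⟩
    filter_upwards [self_mem_nhdsWithin] with y hy
    rw [Real.norm_eq_abs, Real.norm_eq_abs, smul_eq_mul, abs_mul]
    calc |f y - f x - (y - x) * f' x| = |f y - f x - f' x * (y - x)| := by ring_nf
      _ ≤ M * |y - x| * |y - x| := hquad x hx y hy
      _ = M * (|y - x| * |y - x|) := by ring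
  have hsmall : (fun y : ℝ => (y - x) * (y - x)) =o[nhdsWithin x I] (fun y => y - x) := by
    have h1 : (fun y : ℝ => y - x) =o[nhdsWithin x I] (fun _ => (1:ℝ)) := by
      rw [Asymptotics.isLittleO_one_iff]
      have ht : Tendsto (fun y : ℝ => y - x) (nhds x) (nhds 0) := by
        have hc : Continuous (fun y : ℝ => y - x) := continuous_id.sub continuous_const
        simpa using hc.tendsto x
      exact ht.mono_left nhdsWithin_le_nhds
    have h2 := h1.mul_isBigO (Asymptotics.isBigO_refl (fun y : ℝ => y - x) (nhdsWithin x I))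
    simpa using h2
  exact hbig.trans_isLittleO hsmall


lemma backward_dir
    (f : ℝ → ℝ)
    (f' : ℝ → ℝ) (L : ℝ)
    (hd : ∀ x ∈ Icc (0:ℝ) 1, HasDerivWithinAt f (f' x) (Icc 0 1) x)
    (hlip : ∀ x ∈ Icc (0:ℝ) 1, ∀ y ∈ Icc (0:ℝ) 1, |f' x - f' y| ≤ L * |x - y|) :
    (∃ F : ℕ → ℝ → ℝ, ∃ M : ℝ,
      (∀ j, ContDiffOn ℝ 2 (F j) (Icc 0 1)) ∧
      (∀ j, ∀ x ∈ Icc (0:ℝ) 1,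
        |derivWithin (F j) (Icc 0 1) x| ≤ M ∧
        |derivWithin (derivWithin (F j) (Icc 0 1)) (Icc 0 1) x| ≤ M) ∧
      TendstoUniformlyOn F f atTop (Icc 0 1)) := by
  set L0 := max L 0 with hL0def
  have hL0 : 0 ≤ L0 := le_max_right _ _
  have hlip0 : ∀ x ∈ Icc (0:ℝ) 1, ∀ y ∈ Icc (0:ℝ) 1, |f' x - f' y| ≤ L0 * |x - y| := by
    intro x hx y hy
    exact (hlip x hx y hy).trans (by
      have : 0 ≤ |x - y| := abs_nonneg _
      nlinarith [le_max_left L 0])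
  -- the clamp function
  set c : ℝ → ℝ := fun x => max 0 (min 1 x) with hcdef
  have hcmem : ∀ x, c x ∈ Icc (0:ℝ) 1 :=
    fun x => ⟨le_max_left _ _, max_le (by norm_num) (min_le_left _ _)⟩
  have hclip : ∀ x y, |c x - c y| ≤ |x - y| := by
    intro x y
    calc |c x - c y| ≤ |min 1 x - min 1 y| := by
          simpa [hcdef, max_comm] using abs_max_sub_max_le_abs (min 1 x) (min 1 y) 0
      _ ≤ |x - y| := by
          simpa using abs_min_sub_min_le_max 1 x 1 y
  have hceq : ∀ x ∈ Icc (0:ℝ) 1, c x = x := by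
    rintro x ⟨h0, h1⟩
    simp [hcdef, min_eq_right h1, max_eq_right h0]
  have hc0 : c 0 = 0 := hceq 0 (by norm_num)
  set g₁ : ℝ → ℝ := fun x => f' (c x) with hg1def
  have hg₁lip : ∀ x y, |g₁ x - g₁ y| ≤ L0 * |x - y| := by
    intro x y
    refine (hlip0 _ (hcmem x) _ (hcmem y)).trans ?_
    exact mul_le_mul_of_nonneg_left (hclip x y) hL0
  have hg₁eq : ∀ x ∈ Icc (0:ℝ) 1, g₁ x = f' x := fun x hx => by rw [hg1def]; simp [hceq x hx]
  have hg₁cont : Continuous g₁ := by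
    have : LipschitzWith ⟨L0, hL0⟩ g₁ := by
      apply LipschitzWith.of_dist_le_mul
      intro x y
      rw [Real.dist_eq, Real.dist_eq]; exact hg₁lip x y
    exact this.continuous
  set M₁ : ℝ := |f' 0| + L0 with hM1def
  have hM₁ : 0 ≤ M₁ := by positivity
  have hg₁bd : ∀ x, |g₁ x| ≤ M₁ := by
    intro x
    have h1 : |g₁ x - f' 0| ≤ L0 * |c x - 0| := by
      simpa [hg1def, hc0] using hlip0 _ (hcmem x) _ (hcmem 0)
    have h2 : |c x - 0| ≤ 1 := by
      have := hcmem x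
      rw [sub_zero, abs_of_nonneg this.1]; exact this.2
    calc |g₁ x| = |f' 0 + (g₁ x - f' 0)| := by ring_nf
      _ ≤ |f' 0| + |g₁ x - f' 0| := abs_add_le _ _
      _ ≤ M₁ := by
          rw [hM1def]
          have : L0 * |c x - 0| ≤ L0 * 1 := mul_le_mul_of_nonneg_left h2 hL0
          linarith
  -- the extension g of f
  set g : ℝ → ℝ := fun x => f 0 + ∫ t in (0:ℝ)..x, g₁ t with hgdef
  have hgderiv : ∀ x, HasDerivAt g (g₁ x) x := by
    intro x
    have := (hg₁cont.integral_hasStrictDerivAt 0 x).hasDerivAt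
    simpa [hgdef] using this.const_add (f 0)
  have hgdiff : Differentiable ℝ g := fun x => (hgderiv x).differentiableAt
  have hglip : ∀ x y, |g y - g x| ≤ M₁ * |y - x| := by
    intro x y
    have := Convex.norm_image_sub_le_of_norm_hasDerivWithin_le
      (f := g) (f' := g₁) (s := univ) (C := M₁)
      (fun z _ => (hgderiv z).hasDerivWithinAt) (fun z _ => by
        simpa using hg₁bd z) convex_univ (mem_univ x) (mem_univ y)
    simpa [Real.norm_eq_abs] using this
  have hgeq : ∀ x ∈ Icc (0:ℝ) 1, g x = f x := by
    intro x hx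
    have hD : ∀ z ∈ Icc (0:ℝ) 1, HasDerivWithinAt (fun t => g t - f t) 0 (Icc 0 1) z := by
      intro z hz
      have := ((hgderiv z).hasDerivWithinAt (s := Icc 0 1)).sub (hd z hz)
      rw [hg₁eq z hz, sub_self] at this; exact this
    have := Convex.norm_image_sub_le_of_norm_hasDerivWithin_le
      (f := fun t => g t - f t) (f' := fun _ => 0) (s := Icc 0 1) (C := 0)
      hD (fun z _ => by simp) (convex_Icc 0 1) (left_mem_Icc.2 (by norm_num)) hx
    have hg0 : g 0 = f 0 := by simp [hgdef]
    have : |g x - f x - (g 0 - f 0)| ≤ 0 := by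
      simpa [Real.norm_eq_abs] using this
    have := abs_nonpos_iff.mp this
    rw [hg0] at this
    linarith [this]
  -- G, the antiderivative of g
  have hgcont : Continuous g := hgdiff.continuous
  set G : ℝ → ℝ := fun x => ∫ t in (0:ℝ)..x, g t with hGdef
  have hGderiv : ∀ x, HasDerivAt G (g x) x := by
    intro x
    exact (hgcont.integral_hasStrictDerivAt 0 x).hasDerivAt
  have hGC2 : ContDiff ℝ 2 G := by
    have hderivG : deriv G = g := funext fun x => (hGderiv x).deriv
    have hderivg : deriv g = g₁ := funext fun x => (hgderiv x).deriv
    rw [show (2 : WithTop ℕ∞) = 1 + 1 by norm_num, contDiff_succ_iff_deriv]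
    refine ⟨fun x => (hGderiv x).differentiableAt, by simp, ?_⟩
    rw [hderivG, show (1 : WithTop ℕ∞) = 0 + 1 by norm_num, contDiff_succ_iff_deriv]
    refine ⟨hgdiff, by simp, ?_⟩
    rw [hderivg, contDiff_zero]
    exact hg₁cont
  -- the approximating sequence
  set e : ℕ → ℝ := fun j => 1 / (j + 1) with hedef
  have he : ∀ j, 0 < e j := fun j => by positivity
  have hecancel : ∀ j : ℕ, ((j:ℝ) + 1) * e j = 1 := fun j => by
    rw [hedef]; exact mul_one_div_cancel (by positivity)
  set F : ℕ → ℝ → ℝ := fun j x => ((j:ℝ) + 1) * (G (x + e j) - G x) with hFdef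
  have hFC2 : ∀ j, ContDiff ℝ 2 (F j) := by
    intro j
    exact contDiff_const.mul ((hGC2.comp (contDiff_id.add contDiff_const)).sub hGC2)
  set D : ℕ → ℝ → ℝ := fun j x => ((j:ℝ) + 1) * (g (x + e j) - g x) with hDdef
  have hFd : ∀ j x, HasDerivAt (F j) (D j x) x := by
    intro j x
    have h1 : HasDerivAt (fun y => G (y + e j)) (g (x + e j)) x := by
      have h := (hGderiv (x + e j)).comp x ((hasDerivAt_id x).add_const (e j))
      rw [mul_one] at h; exact h
    exact ((h1.sub (hGderiv x)).const_mul _)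
  have hDd : ∀ j x, HasDerivAt (D j) (((j:ℝ) + 1) * (g₁ (x + e j) - g₁ x)) x := by
    intro j x
    have h1 : HasDerivAt (fun y => g (y + e j)) (g₁ (x + e j)) x := by
      have h := (hgderiv (x + e j)).comp x ((hasDerivAt_id x).add_const (e j))
      rw [mul_one] at h; exact h
    exact ((h1.sub (hgderiv x)).const_mul _)
  have hDbd : ∀ j x, |D j x| ≤ M₁ := by
    intro j x
    have h1 : |g (x + e j) - g x| ≤ M₁ * |x + e j - x| := hglip x (x + e j)
    have h2 : |x + e j - x| = e j := by
      rw [add_sub_cancel_left, abs_of_pos (he j)]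
    rw [hDdef]
    have hj : (0:ℝ) ≤ (j:ℝ) + 1 := by positivity
    calc |((j:ℝ) + 1) * (g (x + e j) - g x)| = ((j:ℝ)+1) * |g (x + e j) - g x| := by
          rw [abs_mul, abs_of_nonneg hj]
      _ ≤ ((j:ℝ)+1) * (M₁ * e j) := by
          apply mul_le_mul_of_nonneg_left _ hj
          rw [h2] at h1; exact h1
      _ = M₁ * (((j:ℝ)+1) * e j) := by ring
      _ = M₁ := by rw [hecancel]; ring
  have hD'bd : ∀ (j : ℕ) (x : ℝ), |((j:ℝ) + 1) * (g₁ (x + e j) - g₁ x)| ≤ L0 := by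
    intro j x
    have h1 : |g₁ (x + e j) - g₁ x| ≤ L0 * |x + e j - x| := hg₁lip (x + e j) x
    have h2 : |x + e j - x| = e j := by
      rw [add_sub_cancel_left, abs_of_pos (he j)]
    have hj : (0:ℝ) ≤ (j:ℝ) + 1 := by positivity
    calc |((j:ℝ) + 1) * (g₁ (x + e j) - g₁ x)| = ((j:ℝ)+1) * |g₁ (x + e j) - g₁ x| := by
          rw [abs_mul, abs_of_nonneg hj]
      _ ≤ ((j:ℝ)+1) * (L0 * e j) := by
          apply mul_le_mul_of_nonneg_left _ hj
          rw [h2] at h1; exact h1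
      _ = L0 * (((j:ℝ)+1) * e j) := by ring
      _ = L0 := by rw [hecancel]; ring
  have hUD : UniqueDiffOn ℝ (Icc (0:ℝ) 1) := uniqueDiffOn_Icc one_pos
  have hdW1 : ∀ j, ∀ x ∈ Icc (0:ℝ) 1, derivWithin (F j) (Icc 0 1) x = D j x := by
    intro j x hx
    exact ((hFd j x).hasDerivWithinAt).derivWithin (hUD x hx)
  have hdW2 : ∀ j, ∀ x ∈ Icc (0:ℝ) 1,
      derivWithin (derivWithin (F j) (Icc 0 1)) (Icc 0 1) x
        = ((j:ℝ) + 1) * (g₁ (x + e j) - g₁ x) := by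
    intro j x hx
    rw [derivWithin_congr (fun y hy => hdW1 j y hy) (hdW1 j x hx)]
    exact ((hDd j x).hasDerivWithinAt).derivWithin (hUD x hx)
  -- uniform convergence
  have hint : ∀ (a b : ℝ), IntervalIntegrable g MeasureTheory.volume a b :=
    fun a b => hgcont.intervalIntegrable a b
  have hFg : ∀ j x, |F j x - g x| ≤ M₁ * e j := by
    intro j x
    have hadd : G (x + e j) - G x = ∫ t in x..(x + e j), g t := by
      rw [hGdef]
      have := intervalIntegral.integral_add_adjacent_intervals (hint 0 x) (hint x (x + e j))
      linarith [this]
    have hsplit : (∫ t in x..(x + e j), (g t - g x))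
        = (∫ t in x..(x + e j), g t) - e j * g x := by
      rw [intervalIntegral.integral_sub (hint x _) (intervalIntegrable_const),
        intervalIntegral.integral_const, smul_eq_mul, add_sub_cancel_left]
    have hbound : ‖∫ t in x..(x + e j), (g t - g x)‖ ≤ (M₁ * e j) * |x + e j - x| := by
      apply intervalIntegral.norm_integral_le_of_norm_le_const
      intro t ht
      rw [Set.uIoc_of_le (by linarith [he j])] at ht
      have h1 : |g t - g x| ≤ M₁ * |t - x| := hglip x t
      have h2 : |t - x| ≤ e j := by
        rw [abs_of_pos (by linarith [ht.1])]
        linarith [ht.2]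
      calc ‖g t - g x‖ = |g t - g x| := rfl
        _ ≤ M₁ * |t - x| := h1
        _ ≤ M₁ * e j := mul_le_mul_of_nonneg_left h2 hM₁
    have hxej : |x + e j - x| = e j := by rw [add_sub_cancel_left, abs_of_pos (he j)]
    rw [hxej, Real.norm_eq_abs] at hbound
    have hFgx : F j x - g x = ((j:ℝ) + 1) * ∫ t in x..(x + e j), (g t - g x) := by
      have hFv : F j x = ((j:ℝ) + 1) * (G (x + e j) - G x) := rfl
      rw [hFv, hadd, hsplit]
      linear_combination (g x) * hecancel j
    rw [hFgx]
    have hj : (0:ℝ) ≤ (j:ℝ) + 1 := by positivity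
    calc |((j:ℝ) + 1) * ∫ t in x..(x + e j), (g t - g x)|
        = ((j:ℝ)+1) * |∫ t in x..(x + e j), (g t - g x)| := by rw [abs_mul, abs_of_nonneg hj]
      _ ≤ ((j:ℝ)+1) * ((M₁ * e j) * e j) := mul_le_mul_of_nonneg_left hbound hj
      _ = (M₁ * e j) * (((j:ℝ)+1) * e j) := by ring
      _ = M₁ * e j := by rw [hecancel]; ring
  have htu : TendstoUniformlyOn F f atTop (Icc 0 1) := by
    rw [Metric.tendstoUniformlyOn_iff]
    intro ε hε
    have hlim : Tendsto (fun j : ℕ => M₁ * e j) atTop (nhds 0) := by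
      have := tendsto_one_div_add_atTop_nhds_zero_nat.const_mul M₁
      simpa [hedef] using this
    filter_upwards [hlim.eventually_lt_const hε] with j hj x hx
    have := hFg j x
    rw [hgeq x hx] at this
    rw [Real.dist_eq, abs_sub_comm]
    linarith
  refine ⟨F, max M₁ L0, fun j => (hFC2 j).contDiffOn, ?_, htu⟩
  intro j x hx
  constructor
  · rw [hdW1 j x hx]
    exact (hDbd j x).trans (le_max_left _ _)
  · rw [hdW2 j x hx]
    exact (hD'bd j x).trans (le_max_right _ _)

theorem c2_uniform_approx_iff_c1_lipschitz
    (f : ℝ → ℝ) (hf : ContinuousOn f (Icc 0 1)) :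
    (∃ F : ℕ → ℝ → ℝ, ∃ M : ℝ,
      (∀ j, ContDiffOn ℝ 2 (F j) (Icc 0 1)) ∧
      (∀ j, ∀ x ∈ Icc (0:ℝ) 1,
        |derivWithin (F j) (Icc 0 1) x| ≤ M ∧
        |derivWithin (derivWithin (F j) (Icc 0 1)) (Icc 0 1) x| ≤ M) ∧
      TendstoUniformlyOn F f atTop (Icc 0 1)) ↔
    (∃ f' : ℝ → ℝ, ∃ L : ℝ,
      (∀ x ∈ Icc (0:ℝ) 1, HasDerivWithinAt f (f' x) (Icc 0 1) x) ∧
      ContinuousOn f' (Icc 0 1) ∧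
      ∀ x ∈ Icc (0:ℝ) 1, ∀ y ∈ Icc (0:ℝ) 1, |f' x - f' y| ≤ L * |x - y|) := by
  constructor
  · rintro ⟨F, M, hC2, hbd, hunif⟩
    exact forward_dir f F M hC2 hbd hunif
  · rintro ⟨f', L, hd, hc, hlip⟩
    exact backward_dir f f' L hd hlip
end
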